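/- arXiv:2306.12288 — 7 statements merged into one kernel-verified Lean document; each statement's English description precedes it below -/
import Mathlib

section
/- Let π be an everywhere-positive probability measure on a finite set X, f : X → (0,∞), and 0 < p < q. Then (1/p − 1/q) · Ent_{p,q}(f) = ∫_p^q s^{−2} · (Ent(f^s)/E_π[f^s]) ds. -/
open Finset

theorem two_param_entropy_integral_representation
    (X : Type*) [Fintype X] (π : X → ℝ) (f : X → ℝ)
    (hπ0 : ∀ x, 0 < π x) (hπ1 : ∑ x, π x = 1)
    (hf : ∀ x, 0 < f x) (p q : ℝ) (hp : 0 < p) (hpq : p < q) :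
    (1/p - 1/q) *
        ((p * q / (p - q)) *
          Real.log ((∑ x, π x * f x ^ p) ^ (1/p) / (∑ x, π x * f x ^ q) ^ (1/q)))
      = ∫ s in p..q,
          (1 / s ^ 2) *
            (((∑ x, π x * (f x ^ s * Real.log (f x ^ s)))
                - (∑ x, π x * f x ^ s) * Real.log (∑ x, π x * f x ^ s))
              / (∑ x, π x * f x ^ s)) := by
  have hX : Nonempty X := by
    by_contra h
    rw [not_nonempty_iff] at h
    rw [Finset.univ_eq_empty, Finset.sum_empty] at hπ1
    norm_num at hπ1
  set M : ℝ → ℝ := fun s => ∑ x, π x * f x ^ s with hMdef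
  have hMpos : ∀ s, 0 < M s := fun s =>
    Finset.sum_pos (fun x _ => mul_pos (hπ0 x) (Real.rpow_pos_of_pos (hf x) s))
      ⟨Classical.arbitrary X, Finset.mem_univ _⟩
  have hq : 0 < q := hp.trans hpq
  -- derivative claim
  have key : ∀ s ∈ Set.uIcc p q, HasDerivAt (fun t => t⁻¹ * Real.log (M t))
      ((1 / s ^ 2) *
        (((∑ x, π x * (f x ^ s * Real.log (f x ^ s))) - M s * Real.log (M s)) / M s)) s := by
    intro s hs
    rw [Set.uIcc_of_le hpq.le] at hs
    have hs0 : 0 < s := lt_of_lt_of_le hp hs.1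
    have hM' : HasDerivAt M (∑ x, π x * (f x ^ s * Real.log (f x))) s := by
      apply HasDerivAt.fun_sum
      intro x _
      exact ((Real.hasStrictDerivAt_const_rpow (hf x) s).hasDerivAt.const_mul (π x))
    have hlog : HasDerivAt (fun t => Real.log (M t))
        ((M s)⁻¹ * (∑ x, π x * (f x ^ s * Real.log (f x)))) s :=
      (Real.hasDerivAt_log (hMpos s).ne').comp s hM'
    have h := (hasDerivAt_inv hs0.ne').fun_mul hlog
    refine h.congr_deriv (Eq.symm ?_)
    have hlogsum : (∑ x, π x * (f x ^ s * Real.log (f x ^ s)))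
        = s * ∑ x, π x * (f x ^ s * Real.log (f x)) := by
      rw [Finset.mul_sum]
      refine Finset.sum_congr rfl fun x _ => ?_
      rw [Real.log_rpow (hf x)]; ring
    rw [hlogsum]
    have hsne : s ≠ 0 := hs0.ne'
    have hMne : M s ≠ 0 := (hMpos s).ne'
    field_simp
    ring
  -- continuity of integrand
  have hrpow_cont : ∀ x : X, Continuous fun s : ℝ => f x ^ s := fun x =>
    continuous_iff_continuousAt.mpr fun s => Real.continuousAt_const_rpow (hf x).ne'
  have hMcont : Continuous M :=
    continuous_finset_sum _ fun x _ => continuous_const.mul (hrpow_cont x)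
  have hS1cont : Continuous (fun s : ℝ => ∑ x, π x * (f x ^ s * Real.log (f x ^ s))) := by
    have h : (fun s : ℝ => ∑ x, π x * (f x ^ s * Real.log (f x ^ s)))
        = fun s : ℝ => ∑ x, π x * (f x ^ s * (s * Real.log (f x))) := by
      funext s; exact Finset.sum_congr rfl fun x _ => by rw [Real.log_rpow (hf x)]
    rw [h]
    exact continuous_finset_sum _ fun x _ =>
      continuous_const.mul ((hrpow_cont x).mul (continuous_id.mul continuous_const))
  have hcont : ContinuousOn (fun s =>
      (1 / s ^ 2) *
        (((∑ x, π x * (f x ^ s * Real.log (f x ^ s))) - M s * Real.log (M s)) / M s))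
      (Set.uIcc p q) := by
    apply ContinuousOn.mul
    · apply ContinuousOn.div continuousOn_const (continuous_pow 2).continuousOn
      intro s hs
      rw [Set.uIcc_of_le hpq.le] at hs
      exact pow_ne_zero 2 (lt_of_lt_of_le hp hs.1).ne'
    · refine ContinuousOn.div ?_ hMcont.continuousOn (fun s _ => (hMpos s).ne')
      refine ContinuousOn.sub hS1cont.continuousOn ?_
      exact hMcont.continuousOn.mul (hMcont.continuousOn.log fun s _ => (hMpos s).ne')
  have hint := intervalIntegral.integral_eq_sub_of_hasDerivAt key
    (hcont.intervalIntegrable)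
  rw [hint]
  -- final algebra
  rw [Real.log_div (Real.rpow_pos_of_pos (hMpos p) _).ne' (Real.rpow_pos_of_pos (hMpos q) _).ne',
    Real.log_rpow (hMpos p), Real.log_rpow (hMpos q)]
  have hpq' : p - q ≠ 0 := sub_ne_zero.mpr hpq.ne
  field_simp
  ring
end

section
/- Let A be a symmetric matrix with nonnegative entries indexed by a finite set X, and q ∈ (1,∞) with Hölder conjugate q' = q/(q−1). For any nonzero nonnegative f : X → [0,∞), let Q(x) := f(x)^q / Σ_y f(y)^q. Then the Rayleigh q-quotient R_q(A,f) := (Σ_{x,y} f(x) A_{x,y} f(y)^{q−1}) / (Σ_x f(x)^q) equals Σ_{x,y} Q(x)^{1/q} A_{x,y} Q(y)^{1/q'}, and consequently the q-radius ρ_q(A) := sup over nonzero nonnegative f of R_q(A,f) satisfies ρ_q(A) = ρ_{q'}(A). -/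
open Finset

noncomputable def rayleighQ {X : Type*} [Fintype X] (A : X → X → ℝ) (q : ℝ)
    (f : X → ℝ) : ℝ :=
  (∑ x, ∑ y, f x * A x y * f y ^ (q - 1)) / ∑ x, f x ^ q

noncomputable def qRadius {X : Type*} [Fintype X] (A : X → X → ℝ) (q : ℝ) : ℝ :=
  sSup {r : ℝ | ∃ f : X → ℝ, (∀ x, 0 ≤ f x) ∧ f ≠ 0 ∧ r = rayleighQ A q f}

lemma key_dual {X : Type*} [Fintype X] (A : X → X → ℝ)
    (hAsym : ∀ x y, A x y = A y x) {q : ℝ} (hq : 1 < q)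
    (f : X → ℝ) (hf : ∀ x, 0 ≤ f x) :
    rayleighQ A (q/(q-1)) (fun x => f x ^ (q-1)) = rayleighQ A q f := by
  have hq0 : (0:ℝ) < q - 1 := by linarith
  have hq1 : q - 1 ≠ 0 := ne_of_gt hq0
  have h1 : q/(q-1) - 1 = 1/(q-1) := by field_simp; ring
  unfold rayleighQ
  have hden : ∀ x, (f x ^ (q-1)) ^ (q/(q-1)) = f x ^ q := by
    intro x
    rw [← Real.rpow_mul (hf x)]
    congr 1
    field_simp
  have hpow : ∀ x, (f x ^ (q-1)) ^ (q/(q-1) - 1) = f x := by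
    intro x
    rw [h1, ← Real.rpow_mul (hf x)]
    rw [mul_one_div, div_self hq1, Real.rpow_one]
  simp only [hden, hpow]
  congr 1
  rw [Finset.sum_comm]
  apply Finset.sum_congr rfl; intro x _
  apply Finset.sum_congr rfl; intro y _
  rw [hAsym y x]; ring

theorem rayleigh_symmetry
    (X : Type*) [Fintype X] (A : X → X → ℝ)
    (hA0 : ∀ x y, 0 ≤ A x y) (hAsym : ∀ x y, A x y = A y x)
    (q : ℝ) (hq : 1 < q) :
    (∀ f : X → ℝ, (∀ x, 0 ≤ f x) → f ≠ 0 →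
      rayleighQ A q f
        = ∑ x, ∑ y, (f x ^ q / ∑ z, f z ^ q) ^ (1/q) * A x y *
            (f y ^ q / ∑ z, f z ^ q) ^ (1/(q/(q-1))))
    ∧ qRadius A q = qRadius A (q/(q-1)) := by
  have hq0 : (0:ℝ) < q := by linarith
  have hq1 : q - 1 ≠ 0 := ne_of_gt (by linarith)
  have hqs : (0:ℝ) < q - 1 := by linarith
  constructor
  · intro f hf hfne
    set S := ∑ z, f z ^ q with hS
    have hSpos : 0 < S := by
      obtain ⟨x, hx⟩ : ∃ x, f x ≠ 0 := by
        by_contra h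
        push_neg at h
        exact hfne (funext h)
      apply Finset.sum_pos' (fun i _ => Real.rpow_nonneg (hf i) q)
      exact ⟨x, Finset.mem_univ x, Real.rpow_pos_of_pos (lt_of_le_of_ne (hf x) (Ne.symm hx)) q⟩
    have hq' : 1/(q/(q-1)) = (q-1)/q := by
      rw [one_div_div]
    have hterm : ∀ x y : X,
        (f x ^ q / S) ^ (1/q) * A x y * (f y ^ q / S) ^ (1/(q/(q-1)))
          = f x * A x y * f y ^ (q-1) / S := by
      intro x y
      rw [hq', Real.div_rpow (Real.rpow_nonneg (hf x) q) hSpos.le,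
        Real.div_rpow (Real.rpow_nonneg (hf y) q) hSpos.le,
        ← Real.rpow_mul (hf x), ← Real.rpow_mul (hf y),
        mul_one_div, div_self (ne_of_gt hq0)]
      have : q * ((q-1)/q) = q - 1 := by field_simp
      rw [this, Real.rpow_one]
      rw [div_mul_eq_mul_div, div_mul_div_comm, ← Real.rpow_add hSpos]
      have : 1/q + (q-1)/q = 1 := by field_simp; ring
      rw [this, Real.rpow_one]
    rw [rayleighQ, ← hS, Finset.sum_div]
    apply Finset.sum_congr rfl; intro x _
    rw [Finset.sum_div]
    apply Finset.sum_congr rfl; intro y _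
    exact (hterm x y).symm
  · have hsets : {r : ℝ | ∃ f : X → ℝ, (∀ x, 0 ≤ f x) ∧ f ≠ 0 ∧ r = rayleighQ A q f}
        = {r : ℝ | ∃ f : X → ℝ, (∀ x, 0 ≤ f x) ∧ f ≠ 0 ∧ r = rayleighQ A (q/(q-1)) f} := by
      have hp : 1 < q/(q-1) := by
        rw [lt_div_iff₀ hqs]; linarith
      have hpq : q/(q-1)/(q/(q-1)-1) = q := by
        field_simp; ring
      ext r
      simp only [Set.mem_setOf_eq]
      constructor
      · rintro ⟨f, hf, hfne, rfl⟩
        refine ⟨fun x => f x ^ (q-1), fun x => Real.rpow_nonneg (hf x) _, ?_, ?_⟩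
        · obtain ⟨x, hx⟩ : ∃ x, f x ≠ 0 := by
            by_contra h; push_neg at h; exact hfne (funext h)
          intro h
          have := congrFun h x
          simp only [Pi.zero_apply] at this
          exact absurd this (ne_of_gt (Real.rpow_pos_of_pos (lt_of_le_of_ne (hf x) (Ne.symm hx)) _))
        · exact (key_dual A hAsym hq f hf).symm
      · rintro ⟨g, hg, hgne, rfl⟩
        refine ⟨fun x => g x ^ (q/(q-1)-1), fun x => Real.rpow_nonneg (hg x) _, ?_, ?_⟩
        · obtain ⟨x, hx⟩ : ∃ x, g x ≠ 0 := by
            by_contra h; push_neg at h; exact hgne (funext h)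
          intro h
          have := congrFun h x
          simp only [Pi.zero_apply] at this
          exact absurd this (ne_of_gt (Real.rpow_pos_of_pos (lt_of_le_of_ne (hg x) (Ne.symm hx)) _))
        · have := key_dual A hAsym hp g hg
          rw [hpq] at this
          exact this.symm
    rw [qRadius, qRadius, hsets]
end

section
/- Let A be a symmetric matrix with nonnegative entries indexed by a finite set X. Then the q-radius ρ_q(A) := sup over nonzero nonnegative f of (Σ_{x,y} f(x) A_{x,y} f(y)^{q−1})/(Σ_x f(x)^q) is nondecreasing in q on [2, ∞). -/
open Finset

private lemma rpow_spread {a b s t q : ℝ} (ha : 0 ≤ a) (hb : 0 ≤ b)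
    (hs : 0 < s) (hst : s ≤ t) (htq : s + t ≤ q) :
    a ^ t * b ^ (q - t) + a ^ (q - t) * b ^ t ≤
      a ^ s * b ^ (q - s) + a ^ (q - s) * b ^ s := by
  have ht : 0 < t := hs.trans_le hst
  have hqt : 0 < q - t := by linarith
  have hqs : 0 < q - s := by linarith
  rcases eq_or_lt_of_le ha with ha0 | ha0
  · simp [← ha0, Real.zero_rpow ht.ne', Real.zero_rpow hqt.ne',
      Real.zero_rpow hs.ne', Real.zero_rpow hqs.ne']
  rcases eq_or_lt_of_le hb with hb0 | hb0
  · simp [← hb0, Real.zero_rpow ht.ne', Real.zero_rpow hqt.ne',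
      Real.zero_rpow hs.ne', Real.zero_rpow hqs.ne']
  have key : 0 ≤ (a ^ (t - s) - b ^ (t - s)) * (a ^ (q - s - t) - b ^ (q - s - t)) := by
    rcases le_total a b with h | h
    · apply mul_nonneg_of_nonpos_of_nonpos <;> rw [sub_nonpos] <;>
        exact Real.rpow_le_rpow ha h (by linarith)
    · apply mul_nonneg <;> rw [sub_nonneg] <;>
        exact Real.rpow_le_rpow hb h (by linarith)
  have hab : (0:ℝ) ≤ a ^ s * b ^ s :=
    mul_nonneg (Real.rpow_nonneg ha s) (Real.rpow_nonneg hb s)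
  have h1 : a ^ t = a ^ (t - s) * a ^ s := by
    rw [← Real.rpow_add ha0]; congr 1; ring
  have h2 : a ^ (q - t) = a ^ (q - s - t) * a ^ s := by
    rw [← Real.rpow_add ha0]; congr 1; ring
  have h3 : a ^ (q - s) = a ^ (t - s) * (a ^ (q - s - t) * a ^ s) := by
    rw [← Real.rpow_add ha0, ← Real.rpow_add ha0]; congr 1; ring
  have k1 : b ^ t = b ^ (t - s) * b ^ s := by
    rw [← Real.rpow_add hb0]; congr 1; ring
  have k2 : b ^ (q - t) = b ^ (q - s - t) * b ^ s := by
    rw [← Real.rpow_add hb0]; congr 1; ring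
  have k3 : b ^ (q - s) = b ^ (t - s) * (b ^ (q - s - t) * b ^ s) := by
    rw [← Real.rpow_add hb0, ← Real.rpow_add hb0]; congr 1; ring
  rw [h1, h2, h3, k1, k2, k3]
  nlinarith [mul_nonneg key hab]

theorem qRadius_monotone_on_Ici_two
    (X : Type*) [Fintype X] (A : X → X → ℝ)
    (hA0 : ∀ x y, 0 ≤ A x y) (hAsym : ∀ x y, A x y = A y x) :
    MonotoneOn (fun q => qRadius A q) (Set.Ici (2 : ℝ)) := by
  intro q hq q' hq' hqq'
  simp only [Set.mem_Ici] at hq hq'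
  simp only
  rcases isEmpty_or_nonempty X with hX | hX
  · have hempty : ∀ p : ℝ,
        {r : ℝ | ∃ f : X → ℝ, (∀ x, 0 ≤ f x) ∧ f ≠ 0 ∧ r = rayleighQ A p f} = ∅ := by
      intro p
      ext r
      simp only [Set.mem_setOf_eq, Set.mem_empty_iff_false, iff_false]
      rintro ⟨f, -, hne, -⟩
      exact hne (funext fun x => (IsEmpty.false x).elim)
    rw [qRadius, qRadius, hempty, hempty]
  -- main case
  have hq0 : (0:ℝ) < q := by linarith
  have hq'0 : (0:ℝ) < q' := by linarith
  -- denominator positivity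
  have hden : ∀ (p : ℝ), 0 < p → ∀ f : X → ℝ, (∀ x, 0 ≤ f x) → f ≠ 0 →
      0 < ∑ x, f x ^ p := by
    intro p hp f hf0 hfne
    obtain ⟨x0, hx0⟩ : ∃ x, f x ≠ 0 := by
      by_contra h
      push_neg at h
      exact hfne (funext h)
    refine Finset.sum_pos' (fun x _ => Real.rpow_nonneg (hf0 x) p) ⟨x0, mem_univ x0, ?_⟩
    exact Real.rpow_pos_of_pos (lt_of_le_of_ne (hf0 x0) (Ne.symm hx0)) p
  -- key comparison
  have key : ∀ f : X → ℝ, (∀ x, 0 ≤ f x) → f ≠ 0 →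
      ∃ g : X → ℝ, (∀ x, 0 ≤ g x) ∧ g ≠ 0 ∧ rayleighQ A q f ≤ rayleighQ A q' g := by
    intro f hf0 hfne
    set s : ℝ := q / q' with hs_def
    have hs0 : 0 < s := div_pos hq0 hq'0
    have hs1 : s ≤ 1 := (div_le_one hq'0).mpr hqq'
    have hsq : s * q' = q := div_mul_cancel₀ q hq'0.ne'
    refine ⟨fun x => f x ^ s, fun x => Real.rpow_nonneg (hf0 x) s, ?_, ?_⟩
    · obtain ⟨x0, hx0⟩ : ∃ x, f x ≠ 0 := by
        by_contra h; push_neg at h; exact hfne (funext h)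
      intro h
      have := congrFun h x0
      simp only [Pi.zero_apply] at this
      exact absurd this
        (Real.rpow_pos_of_pos (lt_of_le_of_ne (hf0 x0) (Ne.symm hx0)) s).ne'
    · set g : X → ℝ := fun x => f x ^ s with hg_def
      have hg0 : ∀ x, 0 ≤ g x := fun x => Real.rpow_nonneg (hf0 x) s
      -- denominators equal
      have hD : ∑ x, g x ^ q' = ∑ x, f x ^ q := by
        refine Finset.sum_congr rfl fun x _ => ?_
        rw [hg_def]
        rw [← Real.rpow_mul (hf0 x), hsq]
      -- product identity
      have hgprod : ∀ x y : X, g x * g y ^ (q' - 1) = f x ^ s * f y ^ (q - s) := by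
        intro x y
        rw [hg_def]
        simp only
        rw [← Real.rpow_mul (hf0 y)]
        congr 2
        rw [mul_sub, hsq, mul_one]
      -- numerator inequality via symmetrization
      set Nf : ℝ := ∑ x, ∑ y, f x * A x y * f y ^ (q - 1) with hNf
      set Ng : ℝ := ∑ x, ∑ y, g x * A x y * g y ^ (q' - 1) with hNg
      have swap : ∀ (p : ℝ) (h : X → ℝ),
          (∑ x, ∑ y, h x * A x y * h y ^ (p - 1)) =
            ∑ x, ∑ y, h y * A x y * h x ^ (p - 1) := by
        intro p h
        rw [Finset.sum_comm]
        exact Finset.sum_congr rfl fun x _ => Finset.sum_congr rfl fun y _ => by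
          rw [hAsym x y]
      have double : ∀ (p : ℝ) (h : X → ℝ),
          (∑ x, ∑ y, (h x * A x y * h y ^ (p - 1) + h y * A x y * h x ^ (p - 1))) =
            (∑ x, ∑ y, h x * A x y * h y ^ (p - 1)) +
              (∑ x, ∑ y, h x * A x y * h y ^ (p - 1)) := by
        intro p h
        calc (∑ x, ∑ y, (h x * A x y * h y ^ (p - 1) + h y * A x y * h x ^ (p - 1)))
            = (∑ x, ∑ y, h x * A x y * h y ^ (p - 1)) +
                ∑ x, ∑ y, h y * A x y * h x ^ (p - 1) := by
              rw [← Finset.sum_add_distrib]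
              exact Finset.sum_congr rfl fun x _ => Finset.sum_add_distrib
          _ = (∑ x, ∑ y, h x * A x y * h y ^ (p - 1)) +
                (∑ x, ∑ y, h x * A x y * h y ^ (p - 1)) := by rw [← swap p h]
      have hNle : Nf ≤ Ng := by
        have hdouble :
            (∑ x, ∑ y, (f x * A x y * f y ^ (q - 1) + f y * A x y * f x ^ (q - 1))) ≤
              ∑ x, ∑ y, (g x * A x y * g y ^ (q' - 1) + g y * A x y * g x ^ (q' - 1)) := by
          refine Finset.sum_le_sum fun x _ => Finset.sum_le_sum fun y _ => ?_
          have e1 : g x * g y ^ (q' - 1) = f x ^ s * f y ^ (q - s) := hgprod x y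
          have e2 : g y * g x ^ (q' - 1) = f y ^ s * f x ^ (q - s) := hgprod y x
          calc f x * A x y * f y ^ (q - 1) + f y * A x y * f x ^ (q - 1)
              = A x y * (f x ^ (1:ℝ) * f y ^ (q - 1) + f x ^ (q - 1) * f y ^ (1:ℝ)) := by
                rw [Real.rpow_one, Real.rpow_one]; ring
            _ ≤ A x y * (f x ^ s * f y ^ (q - s) + f x ^ (q - s) * f y ^ s) := by
                apply mul_le_mul_of_nonneg_left _ (hA0 x y)
                exact rpow_spread (hf0 x) (hf0 y) hs0 hs1 (by linarith : s + 1 ≤ q)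
            _ = g x * A x y * g y ^ (q' - 1) + g y * A x y * g x ^ (q' - 1) := by
                linear_combination (-(A x y)) * e1 - A x y * e2
        rw [double q f, double q' g] at hdouble
        rw [hNf, hNg]
        linarith
      have hDpos : 0 < ∑ x, f x ^ q := hden q hq0 f hf0 hfne
      rw [rayleighQ, rayleighQ, hD]
      exact div_le_div_of_nonneg_right hNle hDpos.le
  -- upper bound for the q' set
  have hub : ∀ r ∈ {r : ℝ | ∃ f : X → ℝ, (∀ x, 0 ≤ f x) ∧ f ≠ 0 ∧ r = rayleighQ A q' f},
      r ≤ ∑ x, ∑ y, A x y := by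
    rintro r ⟨f, hf0, hfne, rfl⟩
    have hD := hden q' hq'0 f hf0 hfne
    rw [rayleighQ, div_le_iff₀ hD]
    calc ∑ x, ∑ y, f x * A x y * f y ^ (q' - 1)
        ≤ ∑ x, ∑ y, A x y * (∑ z, f z ^ q') := by
          refine Finset.sum_le_sum fun x _ => Finset.sum_le_sum fun y _ => ?_
          have hm0 : 0 ≤ max (f x) (f y) := le_trans (hf0 x) (le_max_left _ _)
          have h1 : f x * f y ^ (q' - 1) ≤ max (f x) (f y) * max (f x) (f y) ^ (q' - 1) :=
            mul_le_mul (le_max_left _ _)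
              (Real.rpow_le_rpow (hf0 y) (le_max_right _ _) (by linarith))
              (Real.rpow_nonneg (hf0 y) _) hm0
          have h2 : max (f x) (f y) * max (f x) (f y) ^ (q' - 1) = max (f x) (f y) ^ q' := by
            calc max (f x) (f y) * max (f x) (f y) ^ (q' - 1)
                = max (f x) (f y) ^ (1:ℝ) * max (f x) (f y) ^ (q' - 1) := by
                  rw [Real.rpow_one]
              _ = max (f x) (f y) ^ (1 + (q' - 1)) :=
                  (Real.rpow_add' hm0 (by intro h; exact hq'0.ne' (by linarith))).symm
              _ = max (f x) (f y) ^ q' := by congr 1; ring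
          have h3 : max (f x) (f y) ^ q' ≤ ∑ z, f z ^ q' := by
            rcases max_choice (f x) (f y) with h | h
            · rw [h]
              exact Finset.single_le_sum (fun z _ => Real.rpow_nonneg (hf0 z) q')
                (mem_univ x)
            · rw [h]
              exact Finset.single_le_sum (fun z _ => Real.rpow_nonneg (hf0 z) q')
                (mem_univ y)
          calc f x * A x y * f y ^ (q' - 1) = A x y * (f x * f y ^ (q' - 1)) := by ring
            _ ≤ A x y * (∑ z, f z ^ q') := by
                apply mul_le_mul_of_nonneg_left _ (hA0 x y)
                linarith
      _ = (∑ x, ∑ y, A x y) * ∑ x, f x ^ q' := by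
          rw [Finset.sum_mul]
          exact Finset.sum_congr rfl fun x _ => (Finset.sum_mul _ _ _).symm
  have hbdd : BddAbove {r : ℝ | ∃ f : X → ℝ, (∀ x, 0 ≤ f x) ∧ f ≠ 0 ∧ r = rayleighQ A q' f} :=
    ⟨∑ x, ∑ y, A x y, hub⟩
  have hone : (fun _ : X => (1:ℝ)) ≠ 0 := by
    obtain ⟨x0⟩ := hX
    intro h
    have := congrFun h x0
    norm_num at this
  have hne_q : {r : ℝ | ∃ f : X → ℝ, (∀ x, 0 ≤ f x) ∧ f ≠ 0 ∧ r = rayleighQ A q f}.Nonempty :=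
    ⟨rayleighQ A q (fun _ => 1), (fun _ : X => (1:ℝ)), fun _ => zero_le_one, hone, rfl⟩
  rw [qRadius, qRadius]
  apply csSup_le hne_q
  rintro r ⟨f, hf0, hfne, rfl⟩
  obtain ⟨g, hg0, hgne, hle⟩ := key f hf0 hfne
  exact hle.trans (le_csSup hbdd ⟨g, hg0, hgne, rfl⟩)
end

section
/- Let A be a symmetric nonnegative matrix indexed by a finite set X. Writing Q(x) := f(x)^q/Σ f^q, the derivative of R_q(A,f) = Σ_{x,y} Q(x)^{1/q} A_{x,y} Q(y)^{1/q'} with respect to u := 1/q is Σ_{x,y} Q(x)^{u} A_{x,y} Q(y)^{1−u} ln(Q(x)/Q(y)), and this derivative is ≤ 0 whenever u ≤ 1/2 (i.e. q ≥ 2), provided Q is everywhere positive. -/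
open Finset

theorem rayleigh_deriv_in_inv_q
    (X : Type*) [Fintype X] (A : X → X → ℝ)
    (hA0 : ∀ x y, 0 ≤ A x y) (hAsym : ∀ x y, A x y = A y x)
    (Q : X → ℝ) (hQ0 : ∀ x, 0 < Q x) (hQ1 : ∑ x, Q x = 1)
    (u : ℝ) (hu : u ∈ Set.Ioo (0 : ℝ) 1) :
    HasDerivAt (fun v : ℝ => ∑ x, ∑ y, Q x ^ v * A x y * Q y ^ (1 - v))
      (∑ x, ∑ y, Q x ^ u * A x y * Q y ^ (1 - u) * Real.log (Q x / Q y)) u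
    ∧ (u ≤ 1/2 →
        (∑ x, ∑ y, Q x ^ u * A x y * Q y ^ (1 - u) * Real.log (Q x / Q y)) ≤ 0) := by
  constructor
  · apply HasDerivAt.fun_sum
    intro x _
    apply HasDerivAt.fun_sum
    intro y _
    have h1 : HasDerivAt (fun v : ℝ => Q x ^ v) (Q x ^ u * Real.log (Q x)) u :=
      (Real.hasStrictDerivAt_const_rpow (hQ0 x) u).hasDerivAt
    have h2 : HasDerivAt (fun v : ℝ => Q y ^ (1 - v))
        (Q y ^ (1 - u) * Real.log (Q y) * (-1)) u := by
      have := ((Real.hasStrictDerivAt_const_rpow (hQ0 y) (1 - u)).hasDerivAt).comp u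
        ((hasDerivAt_id u).const_sub 1)
      simpa [Function.comp_def] using this
    have := (h1.mul_const (A x y)).fun_mul h2
    refine this.congr_deriv ?_
    rw [Real.log_div (hQ0 x).ne' (hQ0 y).ne']
    ring
  · intro hu2
    set f : X → X → ℝ := fun x y => Q x ^ u * A x y * Q y ^ (1 - u) * Real.log (Q x / Q y)
      with hf
    have key : ∀ x y, f x y + f y x ≤ 0 := by
      intro x y
      have hlog : ∀ a b : X, Real.log (Q a / Q b) = Real.log (Q a) - Real.log (Q b) :=
        fun a b => Real.log_div (hQ0 a).ne' (hQ0 b).ne'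
      have hxy : f x y + f y x =
          A x y * ((Q x ^ u * Q y ^ (1 - u) - Q y ^ u * Q x ^ (1 - u)) *
            (Real.log (Q x) - Real.log (Q y))) := by
        simp only [hf, hlog, hAsym y x]
        ring
      rw [hxy]
      apply mul_nonpos_of_nonneg_of_nonpos (hA0 x y)
      -- WLOG via cases
      have main : ∀ a b : ℝ, 0 < a → 0 < b → a ≤ b →
          a ^ u * b ^ (1 - u) - b ^ u * a ^ (1 - u) ≥ 0 := by
        intro a b ha hb hab
        have h2u : (0:ℝ) ≤ 1 - 2 * u := by linarith
        have : b ^ u * a ^ (1 - u) ≤ a ^ u * b ^ (1 - u) := by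
          have e1 : a ^ (1 - u) = a ^ u * a ^ (1 - 2*u) := by
            rw [← Real.rpow_add ha]; ring_nf
          have e2 : b ^ (1 - u) = b ^ u * b ^ (1 - 2*u) := by
            rw [← Real.rpow_add hb]; ring_nf
          rw [e1, e2]
          have h1 : a ^ (1 - 2*u) ≤ b ^ (1 - 2*u) :=
            Real.rpow_le_rpow ha.le hab h2u
          have hpos : (0:ℝ) ≤ a ^ u := (Real.rpow_pos_of_pos ha u).le
          have hpos2 : (0:ℝ) ≤ b ^ u := (Real.rpow_pos_of_pos hb u).le
          calc b ^ u * (a ^ u * a ^ (1-2*u)) ≤ b ^ u * (a ^ u * b ^ (1-2*u)) := by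
                apply mul_le_mul_of_nonneg_left _ hpos2
                exact mul_le_mul_of_nonneg_left h1 hpos
            _ = a ^ u * (b ^ u * b ^ (1-2*u)) := by ring
        linarith
      rcases le_total (Q x) (Q y) with h | h
      · apply mul_nonpos_of_nonneg_of_nonpos
        · linarith [main (Q x) (Q y) (hQ0 x) (hQ0 y) h]
        · have := Real.log_le_log (hQ0 x) h
          linarith
      · apply mul_nonpos_of_nonpos_of_nonneg
        · linarith [main (Q y) (Q x) (hQ0 y) (hQ0 x) h]
        · have := Real.log_le_log (hQ0 y) h
          linarith
    have hcomm : (∑ x, ∑ y, f x y) = ∑ x, ∑ y, f y x := Finset.sum_comm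
    have : (∑ x, ∑ y, f x y) + (∑ x, ∑ y, f x y) = ∑ x, ∑ y, (f x y + f y x) := by
      nth_rewrite 2 [hcomm]
      rw [← Finset.sum_add_distrib]
      exact Finset.sum_congr rfl fun x _ => (Finset.sum_add_distrib).symm
    have hsum : (∑ x, ∑ y, f x y) + (∑ x, ∑ y, f x y) ≤ 0 := by
      rw [this]
      apply Finset.sum_nonpos
      intro x _
      exact Finset.sum_nonpos fun y _ => key x y
    linarith
end

section
/- Let R be a distribution on a finite set X, and let T_ε^(n)(R) := {x^n : |T_{x^n}(a) − R(a)| ≤ ε R(a) for all a} be its ε-typical set. Suppose n and ε₀ < ε are such that every x^{n−1} ∈ T_{ε₀}^{(n−1)}(R) extended by any symbol y ∈ X gives a sequence in T_ε^{(n)}(R). Define Q on X^n as R^n conditioned on T_ε^{(n)}(R). Then for any x^{n−1} ∈ T_{ε₀}^{(n−1)}(R) with Q-marginal probability positive, the conditional distribution of the last coordinate given the first n−1 coordinates equal x^{n−1} under Q is exactly R. -/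
open Finset

/-- Empirical measure of a sequence. -/
noncomputable def emp {X : Type*} [Fintype X] [DecidableEq X] {n : ℕ}
    (x : Fin n → X) (a : X) : ℝ :=
  ((univ.filter (fun i => x i = a)).card : ℝ) / n

/-- The ε-typical set of a distribution R. -/
noncomputable def typicalSet (X : Type*) [Fintype X] [DecidableEq X] (n : ℕ)
    (ε : ℝ) (R : X → ℝ) : Finset (Fin n → X) :=
  univ.filter (fun x => ∀ a, |emp x a - R a| ≤ ε * R a)

/-- R^n conditioned on the ε-typical set. -/
noncomputable def condTypical {X : Type*} [Fintype X] [DecidableEq X] (n : ℕ)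
    (ε : ℝ) (R : X → ℝ) (x : Fin n → X) : ℝ :=
  (if x ∈ typicalSet X n ε R then ∏ i, R (x i) else 0)
    / ∑ y ∈ typicalSet X n ε R, ∏ i, R (y i)

theorem cond_dist_of_last_coordinate_is_R
    (X : Type*) [Fintype X] [DecidableEq X] (R : X → ℝ)
    (hR0 : ∀ a, 0 ≤ R a) (hR1 : ∑ a, R a = 1)
    (n : ℕ) (ε ε₀ : ℝ) (hε : ε₀ < ε)
    (hZ : 0 < ∑ y ∈ typicalSet X (n+1) ε R, ∏ i, R (y i))
    (hext : ∀ x : Fin n → X, x ∈ typicalSet X n ε₀ R →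
      ∀ y : X, Fin.snoc x y ∈ typicalSet X (n+1) ε R)
    (x : Fin n → X) (hx : x ∈ typicalSet X n ε₀ R)
    (hpos : 0 < ∑ y, condTypical (n+1) ε R (Fin.snoc x y))
    (y : X) :
    condTypical (n+1) ε R (Fin.snoc x y)
        / ∑ y', condTypical (n+1) ε R (Fin.snoc x y') = R y := by
  set Z := ∑ y ∈ typicalSet X (n+1) ε R, ∏ i, R (y i) with hZdef
  set P := ∏ i, R (x i) with hPdef
  have hprod : ∀ y' : X, (∏ i, R ((Fin.snoc x y' : Fin (n+1) → X) i)) = P * R y' := by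
    intro y'
    rw [Fin.prod_univ_castSucc]
    simp [Fin.snoc_castSucc, Fin.snoc_last, hPdef]
  have hct : ∀ y' : X, condTypical (n+1) ε R (Fin.snoc x y') = P * R y' / Z := by
    intro y'
    rw [condTypical, if_pos (hext x hx y'), hprod]
  have hsum : (∑ y', condTypical (n+1) ε R (Fin.snoc x y')) = P / Z := by
    simp only [hct]
    rw [← Finset.sum_div, ← Finset.mul_sum, hR1, mul_one]
  rw [hct, hsum]
  have hPpos : 0 < P := by
    rcases lt_or_ge 0 P with h | h
    · exact h
    · exfalso
      have : P / Z ≤ 0 := div_nonpos_of_nonpos_of_nonneg h hZ.le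
      rw [hsum] at hpos; linarith
  field_simp
end

section
/- Let π^n be the uniform measure on {0,1}^n and let g : {0,1}^n → ℝ satisfy |g(x^n ⊕ e_i) − g(x^n)| ≤ 1 for all coordinates i and all x^n (1-Lipschitz in Hamming metric). Then for all r ≥ 0, P{g(X^n) − E[g(X^n)] ≥ r} ≤ e^{−r²/(4n)}, where X^n ~ π^n. -/
open Finset

private lemma cube_sum_succ {n : ℕ} (f : (Fin (n+1) → Bool) → ℝ) :
    ∑ x, f x = ∑ x' : Fin n → Bool, (f (Fin.cons false x') + f (Fin.cons true x')) := by
  rw [← (Fin.consEquiv fun _ => Bool).sum_comp f, Fintype.sum_prod_type_right]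
  simp only [Fin.consEquiv, Equiv.coe_fn_mk, Fintype.sum_bool]
  exact Finset.sum_congr rfl fun x _ => add_comm _ _

private lemma cube_mgf_bound : ∀ (n : ℕ) (g : (Fin n → Bool) → ℝ),
    (∀ (x : Fin n → Bool) (i : Fin n),
      |g (Function.update x i (!x i)) - g x| ≤ 1) → ∀ L : ℝ,
    ∑ x, Real.exp (L * g x)
      ≤ 2 ^ n * Real.exp (L * ((∑ y, g y) / 2 ^ n) + L ^ 2 * n / 8) := by
  intro n
  induction n with
  | zero =>
    intro g _ L
    simp
  | succ n ih =>
    intro g hLip L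
    set h : (Fin n → Bool) → ℝ :=
      fun x' => (g (Fin.cons false x') + g (Fin.cons true x')) / 2 with hh_def
    set d : (Fin n → Bool) → ℝ :=
      fun x' => g (Fin.cons true x') - g (Fin.cons false x') with hd_def
    clear_value h d
    have hd : ∀ x', |d x'| ≤ 1 := by
      intro x'
      rw [hd_def]
      have := hLip (Fin.cons false x') 0
      simpa [Fin.update_cons_zero] using this
    have hhLip : ∀ (x' : Fin n → Bool) (i : Fin n),
        |h (Function.update x' i (!x' i)) - h x'| ≤ 1 := by
      intro x' i
      have h0 := hLip (Fin.cons false x') i.succ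
      have h1 := hLip (Fin.cons true x') i.succ
      rw [Fin.cons_succ] at h0 h1
      have e0 : Fin.cons (α := fun _ => Bool) false (Function.update x' i (!x' i))
          = Function.update (Fin.cons false x') i.succ (!x' i) :=
        Fin.cons_update (α := fun _ => Bool) _ x' i (!x' i)
      have e1 : Fin.cons (α := fun _ => Bool) true (Function.update x' i (!x' i))
          = Function.update (Fin.cons true x') i.succ (!x' i) :=
        Fin.cons_update (α := fun _ => Bool) _ x' i (!x' i)
      have : |h (Function.update x' i (!x' i)) - h x'|
          = |((g (Function.update (Fin.cons false x') i.succ (!x' i)) - g (Fin.cons false x'))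
            + (g (Function.update (Fin.cons true x') i.succ (!x' i)) - g (Fin.cons true x'))) / 2| := by
        rw [hh_def]; simp only [e0, e1]; ring_nf
      rw [this]
      rw [abs_div]
      have := abs_add_le (g (Function.update (Fin.cons false x') i.succ (!x' i)) - g (Fin.cons false x'))
        (g (Function.update (Fin.cons true x') i.succ (!x' i)) - g (Fin.cons true x'))
      have habs : |(2 : ℝ)| = 2 := by norm_num
      rw [habs]
      linarith
    -- pointwise bound
    have key : ∀ x' : Fin n → Bool,
        Real.exp (L * g (Fin.cons false x')) + Real.exp (L * g (Fin.cons true x'))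
          ≤ 2 * Real.exp (L ^ 2 / 8) * Real.exp (L * h x') := by
      intro x'
      have e0 : L * g (Fin.cons false x') = L * h x' + (-(L * d x' / 2)) := by
        rw [hh_def, hd_def]; ring
      have e1 : L * g (Fin.cons true x') = L * h x' + (L * d x' / 2) := by
        rw [hh_def, hd_def]; ring
      rw [e0, e1, Real.exp_add, Real.exp_add]
      have hcosh : Real.exp (-(L * d x' / 2)) + Real.exp (L * d x' / 2)
          ≤ 2 * Real.exp (L ^ 2 / 8) := by
        have h1 : Real.exp (-(L * d x' / 2)) + Real.exp (L * d x' / 2)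
            = 2 * Real.cosh (L * d x' / 2) := by
          rw [Real.cosh_eq]; ring
        rw [h1]
        have h2 : Real.cosh (L * d x' / 2) ≤ Real.exp ((L * d x' / 2) ^ 2 / 2) :=
          Real.cosh_le_exp_half_sq _
        have h3 : (L * d x' / 2) ^ 2 / 2 ≤ L ^ 2 / 8 := by
          have hd2 : (d x') ^ 2 ≤ 1 := by
            have := sq_abs (d x')
            nlinarith [hd x', abs_nonneg (d x')]
          have he : (L * d x' / 2) ^ 2 / 2 = L ^ 2 * (d x') ^ 2 / 8 := by ring
          have h4 : L ^ 2 * (d x') ^ 2 ≤ L ^ 2 * 1 :=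
            mul_le_mul_of_nonneg_left hd2 (sq_nonneg L)
          rw [he]
          linarith
        have := Real.exp_le_exp.2 h3
        linarith [h2, this]
      calc Real.exp (L * h x') * Real.exp (-(L * d x' / 2))
            + Real.exp (L * h x') * Real.exp (L * d x' / 2)
          = Real.exp (L * h x') * (Real.exp (-(L * d x' / 2)) + Real.exp (L * d x' / 2)) := by
            ring
        _ ≤ Real.exp (L * h x') * (2 * Real.exp (L ^ 2 / 8)) :=
            mul_le_mul_of_nonneg_left hcosh (Real.exp_nonneg _)
        _ = 2 * Real.exp (L ^ 2 / 8) * Real.exp (L * h x') := by ring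
    have hsumh : ∑ y, h y = (∑ y, g y) / 2 := by
      rw [cube_sum_succ g]
      rw [Finset.sum_div]
      rw [hh_def]
    calc ∑ x, Real.exp (L * g x)
        = ∑ x' : Fin n → Bool,
            (Real.exp (L * g (Fin.cons false x')) + Real.exp (L * g (Fin.cons true x'))) :=
          cube_sum_succ _
      _ ≤ ∑ x' : Fin n → Bool, 2 * Real.exp (L ^ 2 / 8) * Real.exp (L * h x') :=
          Finset.sum_le_sum fun x' _ => key x'
      _ = 2 * Real.exp (L ^ 2 / 8) * ∑ x' : Fin n → Bool, Real.exp (L * h x') := by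
          rw [Finset.mul_sum]
      _ ≤ 2 * Real.exp (L ^ 2 / 8)
            * (2 ^ n * Real.exp (L * ((∑ y, h y) / 2 ^ n) + L ^ 2 * n / 8)) := by
          apply mul_le_mul_of_nonneg_left (ih h hhLip L)
          positivity
      _ = 2 ^ (n + 1) * Real.exp (L * ((∑ y, g y) / 2 ^ (n + 1)) + L ^ 2 * (n + 1 : ℕ) / 8) := by
          rw [hsumh, div_div, ← pow_succ']
          have e3 : (2 : ℝ) * Real.exp (L ^ 2 / 8)
              * (2 ^ n * Real.exp (L * ((∑ y, g y) / 2 ^ (n + 1)) + L ^ 2 * n / 8))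
              = 2 ^ (n + 1) * (Real.exp (L ^ 2 / 8)
                * Real.exp (L * ((∑ y, g y) / 2 ^ (n + 1)) + L ^ 2 * n / 8)) := by
            rw [pow_succ]; ring
          rw [e3, ← Real.exp_add]
          congr 2
          push_cast
          ring

theorem hypercube_gaussian_concentration
    (n : ℕ) (g : (Fin n → Bool) → ℝ)
    (hLip : ∀ (x : Fin n → Bool) (i : Fin n),
      |g (Function.update x i (!x i)) - g x| ≤ 1)
    (r : ℝ) (hr : 0 ≤ r) :
    ((univ.filter (fun x : Fin n → Bool =>
        g x - (∑ y, g y) / 2 ^ n ≥ r)).card : ℝ) / 2 ^ n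
      ≤ Real.exp (-(r ^ 2) / (4 * n)) := by
  rcases Nat.eq_zero_or_pos n with hn | hn
  · subst hn
    rw [Nat.cast_zero, mul_zero, div_zero, Real.exp_zero, pow_zero, div_one]
    exact_mod_cast le_trans
      (Finset.card_filter_le (univ : Finset (Fin 0 → Bool)) _)
      (le_of_eq (by simp))
  · set μ := (∑ y, g y) / 2 ^ n with hμ
    set L : ℝ := 2 * r / n with hL
    have hnpos : (0 : ℝ) < n := by exact_mod_cast hn
    have hLnn : 0 ≤ L := by positivity
    -- Chernoff
    have hcount : ((univ.filter (fun x : Fin n → Bool => g x - μ ≥ r)).card : ℝ)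
        * Real.exp (L * r) ≤ ∑ x, Real.exp (L * g x - L * μ) := by
      have hconst : ((univ.filter (fun x : Fin n → Bool => g x - μ ≥ r)).card : ℝ)
          * Real.exp (L * r)
          = ∑ _x ∈ univ.filter (fun x : Fin n → Bool => g x - μ ≥ r), Real.exp (L * r) := by
        rw [Finset.sum_const, nsmul_eq_mul]
      rw [hconst]
      calc ∑ _x ∈ univ.filter (fun x : Fin n → Bool => g x - μ ≥ r), Real.exp (L * r)
          ≤ ∑ x ∈ univ.filter (fun x : Fin n → Bool => g x - μ ≥ r),
              Real.exp (L * g x - L * μ) := by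
            apply Finset.sum_le_sum
            intro x hx
            have hxr : g x - μ ≥ r := (Finset.mem_filter.1 hx).2
            apply Real.exp_le_exp.2
            have : L * r ≤ L * (g x - μ) := mul_le_mul_of_nonneg_left hxr hLnn
            linarith
        _ ≤ ∑ x, Real.exp (L * g x - L * μ) :=
            Finset.sum_le_sum_of_subset_of_nonneg (Finset.filter_subset _ _)
              (fun x _ _ => Real.exp_nonneg _)
    have hmgf : ∑ x, Real.exp (L * g x - L * μ)
        ≤ 2 ^ n * Real.exp (L ^ 2 * n / 8) := by
      have h1 : ∑ x, Real.exp (L * g x - L * μ)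
          = Real.exp (-(L * μ)) * ∑ x, Real.exp (L * g x) := by
        rw [Finset.mul_sum]
        exact Finset.sum_congr rfl fun x _ => by rw [← Real.exp_add]; ring_nf
      rw [h1]
      have h2 := cube_mgf_bound n g hLip L
      calc Real.exp (-(L * μ)) * ∑ x, Real.exp (L * g x)
          ≤ Real.exp (-(L * μ)) * (2 ^ n * Real.exp (L * μ + L ^ 2 * n / 8)) :=
            mul_le_mul_of_nonneg_left h2 (Real.exp_nonneg _)
        _ = 2 ^ n * Real.exp (L ^ 2 * n / 8) := by
            rw [← mul_assoc, mul_comm (Real.exp _) ((2:ℝ) ^ n), mul_assoc, ← Real.exp_add]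
            congr 2
            ring
    have hexp_pos : (0:ℝ) < Real.exp (L * r) := Real.exp_pos _
    have hpow : (0:ℝ) < 2 ^ n := by positivity
    have hfinal : ((univ.filter (fun x : Fin n → Bool => g x - μ ≥ r)).card : ℝ) / 2 ^ n
        ≤ Real.exp (L ^ 2 * n / 8 - L * r) := by
      rw [div_le_iff₀ hpow]
      rw [Real.exp_sub, div_mul_eq_mul_div, le_div_iff₀ hexp_pos]
      calc ((univ.filter (fun x : Fin n → Bool => g x - μ ≥ r)).card : ℝ) * Real.exp (L * r)
          ≤ ∑ x, Real.exp (L * g x - L * μ) := hcount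
        _ ≤ 2 ^ n * Real.exp (L ^ 2 * n / 8) := hmgf
        _ = Real.exp (L ^ 2 * n / 8) * 2 ^ n := mul_comm _ _
    refine hfinal.trans (Real.exp_le_exp.2 ?_)
    rw [hL]
    have hr2 : 0 ≤ r ^ 2 := sq_nonneg r
    have hne : (n : ℝ) ≠ 0 := ne_of_gt hnpos
    have hL2 : (2 * r / (n : ℝ)) ^ 2 * n / 8 - 2 * r / n * r = -(3 * r ^ 2) / (2 * n) := by
      field_simp
      ring
    rw [hL2, div_le_div_iff₀ (by positivity) (by positivity)]
    nlinarith [mul_nonneg hr2 hnpos.le]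
end

section
/- Let g : {0,1}^n → ℝ satisfy |g(y^n) − g(x^n)| ≤ 1 whenever x^n and y^n differ in exactly one coordinate, and let f := e^g. Then for every s ∈ (1,2] and every x^n ∈ {0,1}^n, (1/(s−1)) · (1/2) Σ_{y^n ∼ x^n} (f(y^n) − f(x^n))(f^{s−1}(y^n) − f^{s−1}(x^n)) ≤ n · ((e−1)(e^{s−1}−1)/(2(s−1))) · f^s(x^n), where y^n ∼ x^n means the two strings differ in exactly one coordinate. -/
open Finset

lemma key_exp_bound (a t : ℝ) (ha : 0 < a) (ha1 : a ≤ 1) (ht : |t| ≤ 1) :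
    (Real.exp t - 1) * (Real.exp (a * t) - 1)
      ≤ (Real.exp 1 - 1) * (Real.exp a - 1) := by
  obtain ⟨ht1, ht2⟩ := abs_le.mp ht
  rcases le_or_gt 0 t with h0 | h0
  · have h1 : Real.exp t - 1 ≤ Real.exp 1 - 1 := by
      have := Real.exp_le_exp.mpr ht2; linarith
    have h2 : Real.exp (a * t) - 1 ≤ Real.exp a - 1 := by
      have : a * t ≤ a := by nlinarith
      have := Real.exp_le_exp.mpr this; linarith
    have h3 : 0 ≤ Real.exp t - 1 := by
      have := Real.exp_le_exp.mpr h0; simp at this ⊢; linarith [Real.one_le_exp h0]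
    have h4 : 0 ≤ Real.exp (a * t) - 1 := by
      have : (0:ℝ) ≤ a * t := by positivity
      linarith [Real.one_le_exp this]
    exact mul_le_mul h1 h2 h4 (by linarith [Real.one_le_exp (zero_le_one (α := ℝ))])
  · have e1 : Real.exp t ≤ 1 := Real.exp_le_one_iff.mpr h0.le
    have e2 : Real.exp (a * t) ≤ 1 := by
      apply Real.exp_le_one_iff.mpr; nlinarith
    have h1 : 1 - Real.exp t ≤ Real.exp 1 - 1 := by
      have := Real.add_one_le_exp t
      have := Real.add_one_le_exp (1:ℝ)
      linarith
    have h2 : 1 - Real.exp (a * t) ≤ Real.exp a - 1 := by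
      have := Real.add_one_le_exp (a * t)
      have := Real.add_one_le_exp a
      nlinarith
    have := mul_le_mul h1 h2 (by linarith) (by
      have := Real.add_one_le_exp (1:ℝ); linarith)
    nlinarith

theorem carre_du_champ_bound_hypercube
    (n : ℕ) (g : (Fin n → Bool) → ℝ)
    (hLip : ∀ (x : Fin n → Bool) (i : Fin n),
      |g (Function.update x i (!x i)) - g x| ≤ 1)
    (f : (Fin n → Bool) → ℝ) (hfg : ∀ x, f x = Real.exp (g x))
    (s : ℝ) (hs1 : 1 < s) (hs2 : s ≤ 2) (x : Fin n → Bool) :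
    (1/(s-1)) * ((1/2) * ∑ i : Fin n,
        (f (Function.update x i (!x i)) - f x) *
          (f (Function.update x i (!x i)) ^ (s-1) - f x ^ (s-1)))
      ≤ n * ((Real.exp 1 - 1) * (Real.exp (s-1) - 1) / (2*(s-1))) * f x ^ s := by
  have ha : 0 < s - 1 := by linarith
  have ha1 : s - 1 ≤ 1 := by linarith
  set C := (Real.exp 1 - 1) * (Real.exp (s-1) - 1) with hC
  have hfxs : f x ^ s = Real.exp (g x * s) := by
    rw [hfg, ← Real.exp_mul]
  -- pointwise bound on each summand
  have hterm : ∀ i : Fin n,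
      (f (Function.update x i (!x i)) - f x) *
        (f (Function.update x i (!x i)) ^ (s-1) - f x ^ (s-1))
        ≤ C * f x ^ s := by
    intro i
    set y := Function.update x i (!x i)
    set t := g y - g x with htdef
    have hfy : f y = Real.exp (g x) * Real.exp t := by
      rw [hfg, ← Real.exp_add]; ring_nf; congr 1; rw [htdef]; ring
    have hfyp : f y ^ (s-1) = Real.exp (g x * (s-1)) * Real.exp ((s-1) * t) := by
      rw [hfg, ← Real.exp_mul, ← Real.exp_add]; ring_nf; congr 1; rw [htdef]; ring
    have hfxp : f x ^ (s-1) = Real.exp (g x * (s-1)) := by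
      rw [hfg, ← Real.exp_mul]
    have hkey := key_exp_bound (s-1) t ha ha1 (hLip x i)
    have hsplit : Real.exp (g x) * Real.exp (g x * (s-1)) = Real.exp (g x * s) := by
      rw [← Real.exp_add]; ring_nf
    have hpos : (0:ℝ) < Real.exp (g x * s) := Real.exp_pos _
    calc (f y - f x) * (f y ^ (s-1) - f x ^ (s-1))
        = Real.exp (g x * s) * ((Real.exp t - 1) * (Real.exp ((s-1) * t) - 1)) := by
          rw [hfyp, hfy, hfxp, hfg, ← hsplit]; ring
      _ ≤ Real.exp (g x * s) * C := by
          apply mul_le_mul_of_nonneg_left _ hpos.le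
          rw [hC]; exact hkey
      _ = C * f x ^ s := by rw [hfxs]; ring
  have hsum : ∑ i : Fin n,
      (f (Function.update x i (!x i)) - f x) *
        (f (Function.update x i (!x i)) ^ (s-1) - f x ^ (s-1))
      ≤ n * (C * f x ^ s) := by
    calc _ ≤ ∑ _i : Fin n, C * f x ^ s := Finset.sum_le_sum fun i _ => hterm i
      _ = n * (C * f x ^ s) := by simp [mul_comm]
  calc (1/(s-1)) * ((1/2) * ∑ i : Fin n,
        (f (Function.update x i (!x i)) - f x) *
          (f (Function.update x i (!x i)) ^ (s-1) - f x ^ (s-1)))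
      ≤ (1/(s-1)) * ((1/2) * (n * (C * f x ^ s))) := by
        apply mul_le_mul_of_nonneg_left _ (by positivity)
        apply mul_le_mul_of_nonneg_left hsum (by norm_num)
    _ = n * (C / (2*(s-1))) * f x ^ s := by
        field_simp
end
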